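/- arXiv:2306.06630 — 3 statements merged into one kernel-verified Lean document; each statement's English description precedes it below -/
import Mathlib

section
/- (Resolution theorem) For every formula φ, propositional variable p, and natural numbers n, m, m' with n > m' ≥ m, the sentence (φ + m'·p + m·(¬p))^(⋈,n) semantically entails the sentence (φ + (m'−m)·p)^(⋈, n−m), i.e., every interpretation modeling the former models the latter. -/
/-- PPL formulas: built from propositional variables (indexed by ℕ) by negation,
addition, and scalar multiplication by natural numbers; `zero` is the empty sum. -/
inductive Fm where
  | zero : Fm
  | var : ℕ → Fm
  | neg : Fm → Fm
  | add : Fm → Fm → Fm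
  | smul : ℕ → Fm → Fm

open Classical in
/-- The meaning of a formula under an interpretation `I ⊆ P`, as a pair in ℤ². -/
noncomputable def eval (I : Set ℕ) : Fm → ℤ × ℤ
  | .zero => (0, 0)
  | .var p => if p ∈ I then (1, 0) else (0, 1)
  | .neg φ => ((eval I φ).2, (eval I φ).1)
  | .add φ ψ => eval I φ + eval I ψ
  | .smul n φ => ((n : ℤ) * (eval I φ).1, (n : ℤ) * (eval I φ).2)

/-- Literals: a variable or its negation. -/
inductive Lit where
  | pos : ℕ → Lit
  | neg : ℕ → Lit

def Lit.toFm : Lit → Fm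
  | .pos p => .var p
  | .neg p => .neg (.var p)

def Lit.negate : Lit → Lit
  | .pos p => .neg p
  | .neg p => .pos p

/-- A normal-form formula is a finite sum of pseudo-literals `nᵢ·λᵢ`,
represented by a list of coefficient–literal pairs. -/
def nf : List (ℕ × Lit) → Fm
  | [] => .zero
  | x :: xs => .add (.smul x.1 x.2.toFm) (nf xs)

/-- The coefficient sum of a normal-form formula. -/
def coeffSum (l : List (ℕ × Lit)) : ℕ := (l.map Prod.fst).sum

/-- Negation of a normal-form formula: negate each literal. -/
def negnf (l : List (ℕ × Lit)) : List (ℕ × Lit) := l.map fun x => (x.1, x.2.negate)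

/-- A standard sentence `φ^(≥,n)`: a normal-form formula with a `≥`-threshold. -/
structure Sent where
  phi : List (ℕ × Lit)
  bound : ℕ

/-- `I ⊨ φ^(≥,n)` iff the first component of `I(φ)` is at least `n`. -/
def smodels (I : Set ℕ) (Φ : Sent) : Prop := (eval I (nf Φ.phi)).1 ≥ (Φ.bound : ℤ)

def setModels (I : Set ℕ) (S : Set Sent) : Prop := ∀ Φ ∈ S, smodels I Φ

/-- Semantic consequence: every model of `S` models every member of `S'`. -/
def entails (S S' : Set Sent) : Prop := ∀ I, setModels I S → setModels I S'

/-- The unsatisfiable empty sentence `()^(≥,1)`. -/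
def bot : Sent := ⟨[], 1⟩

/-- Derivability of a single sentence in the two-rule CPPL resolution system. -/
inductive DerivOne (S : Set Sent) : Sent → Prop
  | init {Φ} : Φ ∈ S → DerivOne S Φ
  | res {γ₁ γ₂ β n₁ n₂} :
      DerivOne S ⟨γ₁ ++ β, n₁⟩ → DerivOne S ⟨γ₂ ++ negnf β, n₂⟩ →
      DerivOne S ⟨γ₁ ++ γ₂, n₁ + n₂ - coeffSum β⟩

/-- `S ⊢ʳ S'`: every sentence of `S'` is derivable from `S`. -/
def Deriv (S S' : Set Sent) : Prop := ∀ Φ ∈ S', DerivOne S Φ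

/-- The deductive closure of `S`. -/
def DClosure (S : Set Sent) : Set Sent := {Φ | DerivOne S Φ}

/-- Consistency: `S ⊬ʳ ⊥`. -/
def Consistent (S : Set Sent) : Prop := ¬ DerivOne S bot

/-- The five comparison relations. -/
inductive Cmp where
  | gt | ge | eq | lt | le

def Cmp.holds : Cmp → ℤ → ℤ → Prop
  | .gt, a, b => a > b
  | .ge, a, b => a ≥ b
  | .eq, a, b => a = b
  | .lt, a, b => a < b
  | .le, a, b => a ≤ b

/-- Resolution theorem: for n > m' ≥ m,
(φ + m'·p + m·(¬p))^(⋈,n) entails (φ + (m'−m)·p)^(⋈,n−m). -/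
theorem resolution_theorem (c : Cmp) (φ : Fm) (p : ℕ) (n m m' : ℕ)
    (hm : m ≤ m') (hn : m' < n) :
    ∀ I : Set ℕ,
      c.holds (eval I (Fm.add (Fm.add φ (Fm.smul m' (Fm.var p)))
        (Fm.smul m (Fm.neg (Fm.var p))))).1 (n : ℤ) →
      c.holds (eval I (Fm.add φ (Fm.smul (m' - m) (Fm.var p)))).1 ((n - m : ℕ) : ℤ) := by
  intro I h
  by_cases hp : p ∈ I <;>
    simp only [eval, hp, if_pos, if_neg, not_false_iff, Prod.fst_add, mul_one, mul_zero] at h ⊢ <;>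
    cases c <;> simp only [Cmp.holds] at h ⊢ <;>
    omega
end

section
/- (Soundness of Rule II semantically) Suppose φ₁, φ₂ are formulas, β = Σᵢ mᵢλᵢ is a normal form formula with coefficient sum |β|, and ¬β = Σᵢ mᵢ(¬λᵢ). If an interpretation I models both (φ₁ + β)^(≥,n₁) and (φ₂ + ¬β)^(≥,n₂), then I models (φ₁ + φ₂)^(≥, n₁+n₂−|β|). -/
lemma eval_nonneg (I : Set ℕ) (φ : Fm) : 0 ≤ (eval I φ).1 ∧ 0 ≤ (eval I φ).2 := by
  induction φ with
  | zero => simp [eval]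
  | var p => simp only [eval]; split <;> simp
  | neg φ ih => simpa [eval, and_comm] using ih
  | add φ ψ ih1 ih2 =>
    simp only [eval, Prod.fst_add, Prod.snd_add]
    exact ⟨add_nonneg ih1.1 ih2.1, add_nonneg ih1.2 ih2.2⟩
  | smul n φ ih =>
    exact ⟨mul_nonneg (by positivity) ih.1, mul_nonneg (by positivity) ih.2⟩

lemma lit_sum (I : Set ℕ) (l : Lit) :
    (eval I l.toFm).1 + (eval I l.negate.toFm).1 = 1 := by
  cases l with
  | pos p => simp only [Lit.toFm, Lit.negate, eval]; split <;> simp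
  | neg p => simp only [Lit.toFm, Lit.negate, eval]; split <;> simp

lemma nf_sum (I : Set ℕ) (β : List (ℕ × Lit)) :
    (eval I (nf β)).1 + (eval I (nf (negnf β))).1 = (coeffSum β : ℤ) := by
  induction β with
  | nil => simp [nf, negnf, eval, coeffSum]
  | cons x xs ih =>
    simp only [nf, negnf, List.map_cons, eval, coeffSum, List.sum_cons, Prod.fst_add] at *
    have := lit_sum I x.2
    push_cast
    push_cast [coeffSum, negnf] at ih
    have hm : (x.1:ℤ)*(eval I x.2.toFm).1 + (x.1:ℤ)*(eval I x.2.negate.toFm).1 = (x.1:ℤ) := by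
      rw [← mul_add, this, mul_one]
    linarith

/-- semantic soundness of Rule II: if I ⊨ (φ₁+β)^(≥,n₁) and
I ⊨ (φ₂+¬β)^(≥,n₂) then I ⊨ (φ₁+φ₂)^(≥,n₁+n₂−|β|). -/
theorem ruleII_sound (I : Set ℕ) (φ₁ φ₂ : Fm) (β : List (ℕ × Lit)) (n₁ n₂ : ℕ)
    (h1 : (eval I (Fm.add φ₁ (nf β))).1 ≥ (n₁ : ℤ))
    (h2 : (eval I (Fm.add φ₂ (nf (negnf β)))).1 ≥ (n₂ : ℤ)) :
    (eval I (Fm.add φ₁ φ₂)).1 ≥ ((n₁ + n₂ - coeffSum β : ℕ) : ℤ) := by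
  have key := nf_sum I β
  simp only [eval, Prod.fst_add] at *
  have h3 : (eval I φ₁).1 + (eval I φ₂).1 ≥ (n₁:ℤ) + n₂ - coeffSum β := by linarith
  have := (eval_nonneg I φ₁).1
  have := (eval_nonneg I φ₂).1
  omega
end

section
/- (Soundness of CPPL resolution) For any sets of sentences S, S': if S ⊢ʳ S' in the two-rule CPPL resolution system, then S ⊨ S'. -/
lemma nf_append (I : Set ℕ) (a b : List (ℕ × Lit)) :
    eval I (nf (a ++ b)) = eval I (nf a) + eval I (nf b) := by
  induction a with
  | nil => simp [nf, eval]
  | cons x xs ih => simp [nf, eval, ih]; ring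

lemma nf_negnf (I : Set ℕ) (b : List (ℕ × Lit)) :
    (eval I (nf b)).1 + (eval I (nf (negnf b))).1 = (coeffSum b : ℤ) := by
  induction b with
  | nil => simp [nf, eval, negnf, coeffSum]
  | cons x xs ih =>
    have := lit_sum I x.2
    simp only [nf, negnf, coeffSum, eval, List.map_cons, List.sum_cons,
      Prod.fst_add] at *
    push_cast at *
    nlinarith [ih, this]

lemma nf_nonneg (I : Set ℕ) (l : List (ℕ × Lit)) : 0 ≤ (eval I (nf l)).1 := by
  induction l with
  | nil => simp [nf, eval]
  | cons x xs ih =>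
    have hl : 0 ≤ (eval I x.2.toFm).1 := by
      cases x.2 with
      | pos p => by_cases h : p ∈ I <;> simp [Lit.toFm, eval, h]
      | neg p => by_cases h : p ∈ I <;> simp [Lit.toFm, eval, h]
    simp only [nf, eval, Prod.fst_add]
    positivity

/-- Soundness of CPPL resolution: S ⊢ʳ S' implies S ⊨ S'. -/
theorem soundness (S S' : Set Sent) (h : Deriv S S') : entails S S' := by
  intro I hI Φ hΦ
  have key : ∀ Ψ, DerivOne S Ψ → smodels I Ψ := by
    intro Ψ hΨ
    induction hΨ with
    | init h' => exact hI _ h'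
    | @res γ₁ γ₂ β n₁ n₂ _ _ ih1 ih2 =>
      unfold smodels at *
      simp only [nf_append] at *
      have hb := nf_negnf I β
      have h1 := nf_nonneg I γ₁
      have h2 := nf_nonneg I γ₂
      simp only [Prod.fst_add] at *
      omega
  exact key Φ (h Φ hΦ)
end
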